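/- (Theorem 3.) Let K be a real n×n positive definite matrix, let C be a real n×m matrix, and set P = K⁻¹C, so that C = KP and W_e := PᵀKP = CᵀK⁻¹C. Assume W_e is positive definite, and let W = W_e + E, where E is a real symmetric m×m matrix such that W is positive definite. Let W_e^{-1/2} denote the inverse of the positive definite square root of W_e, and set η = ‖W_e^{-1/2} E W_e^{-1/2}‖₂, the spectral norm. If η < 1, then ‖C W⁻¹ Cᵀ − C W_e⁻¹ Cᵀ‖₂ ≤ (η/(1−η)) · ‖K‖₂. -/

import Mathlib

/-!
With `S = W_e^{1/2}` and `F = S⁻¹ E S⁻¹` we have `W = S (1 + F) S`, so with `B = C S⁻¹`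
the difference `C W⁻¹ Cᵀ - C W_e⁻¹ Cᵀ` equals `-B (1 + F)⁻¹ F Bᵀ`. Since `‖F‖ = η < 1`, the
Neumann series gives `‖(1 + F)⁻¹‖ ≤ 1 / (1 - η)`. Finally `B = K^{1/2} Q` with `Qᵀ Q = 1`
(this is `C = K P` together with `W_e = Pᵀ K P`), so `‖B‖² ≤ ‖K‖`.
-/

open Matrix

noncomputable def specNorm {α β : Type*} [Fintype α] [Fintype β] [DecidableEq α] [DecidableEq β]
    (A : Matrix α β ℝ) : ℝ :=
  ‖(Matrix.toEuclideanLin A).toContinuousLinearMap‖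

noncomputable def Matrix.PosSemidef.sqrt {n : Type*} [Fintype n] [DecidableEq n]
    {A : Matrix n n ℝ} (hA : A.PosSemidef) : Matrix n n ℝ :=
  hA.1.eigenvectorUnitary.1 * diagonal ((↑) ∘ (√·) ∘ hA.1.eigenvalues) *
  (star hA.1.eigenvectorUnitary : Matrix n n ℝ)

open scoped Matrix.Norms.L2Operator

namespace Matrix

section Sqrt

variable {ι : Type*} [Fintype ι] [DecidableEq ι] {A : Matrix ι ι ℝ}

lemma PosSemidef.transpose_sqrt (hA : A.PosSemidef) : hA.sqrtᵀ = hA.sqrt := by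
  unfold PosSemidef.sqrt
  simp only [transpose_mul, diagonal_transpose, star_eq_conjTranspose,
    conjTranspose_eq_transpose_of_trivial, transpose_transpose, Matrix.mul_assoc]

lemma PosSemidef.sqrt_mul_self (hA : A.PosSemidef) : hA.sqrt * hA.sqrt = A := by
  set U : Matrix ι ι ℝ := hA.1.eigenvectorUnitary.1
  set D : Matrix ι ι ℝ := diagonal ((↑) ∘ (√·) ∘ hA.1.eigenvalues)
  have hU : star U * U = 1 := Unitary.star_mul_self_of_mem hA.1.eigenvectorUnitary.2
  have hD : D * D = diagonal ((↑) ∘ hA.1.eigenvalues) := by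
    rw [diagonal_mul_diagonal]
    congr 1 with i
    simp [Real.mul_self_sqrt (hA.eigenvalues_nonneg i)]
  calc hA.sqrt * hA.sqrt = U * (D * (star U * U) * D) * star U := by
        simp only [PosSemidef.sqrt, Matrix.mul_assoc]; rfl
    _ = A := by rw [hU, Matrix.mul_one, hD]; exact hA.1.spectral_theorem.symm

lemma PosDef.isUnit_sqrt (hA : A.PosDef) : IsUnit hA.posSemidef.sqrt := by
  have h := congrArg det hA.posSemidef.sqrt_mul_self
  rw [det_mul] at h
  rw [isUnit_iff_isUnit_det, isUnit_iff_ne_zero]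
  exact left_ne_zero_of_mul (h ▸ hA.det_pos.ne')

end Sqrt

lemma inv_one_add_sub_one {n α : Type*} [Fintype n] [DecidableEq n] [CommRing α]
    {F : Matrix n n α} (hF : IsUnit (1 + F)) : (1 + F)⁻¹ - 1 = -((1 + F)⁻¹ * F) := by
  have h := nonsing_inv_mul _ ((isUnit_iff_isUnit_det _).mp hF)
  rw [mul_add, mul_one] at h
  exact eq_neg_of_add_eq_zero_left (by rw [sub_add_eq_add_sub, h, sub_self])

lemma mul_inv_mul_transpose_conj {l n α : Type*} [Fintype n] [DecidableEq n] [CommRing α]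
    (C : Matrix l n α) {S : Matrix n n α} (hS : Sᵀ = S) (G : Matrix n n α) :
    C * (S * G * S)⁻¹ * Cᵀ = C * S⁻¹ * G⁻¹ * (C * S⁻¹)ᵀ := by
  rw [mul_inv_rev, mul_inv_rev, transpose_mul, transpose_nonsing_inv, hS]
  simp only [Matrix.mul_assoc]

lemma mul_inv_conj_mul_transpose_sub {l n α : Type*} [Fintype n] [DecidableEq n] [CommRing α]
    (C : Matrix l n α) {S F : Matrix n n α} (hS : Sᵀ = S) (hF : IsUnit (1 + F)) :
    C * (S * (1 + F) * S)⁻¹ * Cᵀ - C * (S * S)⁻¹ * Cᵀ =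
      -(C * S⁻¹ * ((1 + F)⁻¹ * F) * (C * S⁻¹)ᵀ) := by
  have hSS : S * S = S * 1 * S := by rw [Matrix.mul_one]
  rw [hSS, mul_inv_mul_transpose_conj _ hS, mul_inv_mul_transpose_conj _ hS, inv_one,
    ← Matrix.sub_mul, ← Matrix.mul_sub, inv_one_add_sub_one hF, Matrix.mul_neg, Matrix.neg_mul]

section L2OpNorm

variable {𝕜 m n : Type*} [RCLike 𝕜] [Fintype m] [Fintype n] [DecidableEq m] [DecidableEq n]

lemma l2_opNorm_one_le : ‖(1 : Matrix n n 𝕜)‖ ≤ 1 := by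
  rw [← l2_opNorm_toEuclideanCLM, map_one]
  exact ContinuousLinearMap.norm_id_le

lemma isUnit_one_add_of_l2_opNorm_lt_one {F : Matrix n n 𝕜} (hF : ‖F‖ < 1) :
    IsUnit (1 + F) := by
  simpa using isUnit_one_sub_of_norm_lt_one (x := -F) (by rwa [norm_neg])

lemma l2_opNorm_inv_one_add_le {F : Matrix n n 𝕜} (hF : ‖F‖ < 1) :
    ‖(1 + F)⁻¹‖ ≤ (1 - ‖F‖)⁻¹ := by
  have h : ‖(1 + F)⁻¹‖ ≤ 1 + ‖(1 + F)⁻¹‖ * ‖F‖ := calc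
    ‖(1 + F)⁻¹‖ = ‖1 + ((1 + F)⁻¹ - 1)‖ := by rw [add_sub_cancel]
    _ = ‖1 - (1 + F)⁻¹ * F‖ := by
      rw [inv_one_add_sub_one (isUnit_one_add_of_l2_opNorm_lt_one hF), ← sub_eq_add_neg]
    _ ≤ ‖(1 : Matrix n n 𝕜)‖ + ‖(1 + F)⁻¹ * F‖ := norm_sub_le _ _
    _ ≤ 1 + ‖(1 + F)⁻¹‖ * ‖F‖ := add_le_add l2_opNorm_one_le (l2_opNorm_mul _ _)
  rw [← one_div (1 - ‖F‖), le_div_iff₀ (sub_pos.mpr hF)]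
  linarith

end L2OpNorm

section RealL2OpNorm

variable {m n : Type*} [Fintype m] [Fintype n] [DecidableEq n]

lemma l2_opNorm_transpose [DecidableEq m] (A : Matrix m n ℝ) : ‖Aᵀ‖ = ‖A‖ := by
  rw [← conjTranspose_eq_transpose_of_trivial, l2_opNorm_conjTranspose]

lemma l2_opNorm_transpose_mul_self (A : Matrix m n ℝ) : ‖Aᵀ * A‖ = ‖A‖ * ‖A‖ := by
  rw [← conjTranspose_eq_transpose_of_trivial, l2_opNorm_conjTranspose_mul_self]

lemma l2_opNorm_le_one_of_transpose_mul_self_eq_one {Q : Matrix m n ℝ} (hQ : Qᵀ * Q = 1) :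
    ‖Q‖ ≤ 1 := by
  have h := l2_opNorm_transpose_mul_self Q
  rw [hQ] at h
  nlinarith [norm_nonneg Q, l2_opNorm_one_le (𝕜 := ℝ) (n := n)]

lemma l2_opNorm_mul_mul_transpose_le [DecidableEq m] (B : Matrix m n ℝ) (M : Matrix n n ℝ) :
    ‖B * M * Bᵀ‖ ≤ ‖M‖ * (‖B‖ * ‖B‖) := calc
  ‖B * M * Bᵀ‖ ≤ ‖B‖ * ‖M‖ * ‖Bᵀ‖ :=
    (l2_opNorm_mul _ _).trans (mul_le_mul_of_nonneg_right (l2_opNorm_mul _ _) (norm_nonneg _))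
  _ = ‖M‖ * (‖B‖ * ‖B‖) := by rw [l2_opNorm_transpose]; ring

lemma l2_opNorm_mul_self_mul_inv_le [DecidableEq m] {K : Matrix m m ℝ} (hK : K.PosSemidef)
    (P : Matrix m n ℝ) {S : Matrix n n ℝ} (hSu : IsUnit S) (hS : Sᵀ = S)
    (hSS : S * S = Pᵀ * K * P) :
    ‖K * P * S⁻¹‖ * ‖K * P * S⁻¹‖ ≤ ‖K‖ := by
  set R := hK.sqrt
  have hR : Rᵀ = R := hK.transpose_sqrt
  have hRR : R * R = K := hK.sqrt_mul_self
  have hSdet := (isUnit_iff_isUnit_det S).mp hSu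
  have hQ : (R * P * S⁻¹)ᵀ * (R * P * S⁻¹) = 1 := calc
    _ = S⁻¹ * (Pᵀ * (R * R) * P) * S⁻¹ := by
      rw [transpose_mul, transpose_mul, transpose_nonsing_inv, hS, hR]
      simp only [Matrix.mul_assoc]
    _ = 1 := by
      rw [hRR, ← hSS, ← mul_assoc, nonsing_inv_mul _ hSdet, one_mul, mul_nonsing_inv _ hSdet]
  have hRQ : K * P * S⁻¹ = R * (R * P * S⁻¹) := by rw [← hRR]; simp only [Matrix.mul_assoc]
  have hB : ‖K * P * S⁻¹‖ ≤ ‖R‖ := calc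
    ‖K * P * S⁻¹‖ ≤ ‖R‖ * ‖R * P * S⁻¹‖ := hRQ ▸ l2_opNorm_mul _ _
    _ ≤ ‖R‖ :=
      mul_le_of_le_one_right (norm_nonneg R) (l2_opNorm_le_one_of_transpose_mul_self_eq_one hQ)
  calc ‖K * P * S⁻¹‖ * ‖K * P * S⁻¹‖ ≤ ‖R‖ * ‖R‖ := mul_self_le_mul_self (norm_nonneg _) hB
    _ = ‖K‖ := by rw [← l2_opNorm_transpose_mul_self, hR, hRR]

end RealL2OpNorm

end Matrix

theorem stmt_13_general {n m : ℕ} (K : Matrix (Fin n) (Fin n) ℝ) (hK : K.PosDef)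
    (C : Matrix (Fin n) (Fin m) ℝ)
    (P : Matrix (Fin n) (Fin m) ℝ) (hP : P = K⁻¹ * C)
    (We : Matrix (Fin m) (Fin m) ℝ) (hWe_def : We = Pᵀ * K * P) (hWe : We.PosDef)
    (E : Matrix (Fin m) (Fin m) ℝ)
    (W : Matrix (Fin m) (Fin m) ℝ) (hW_def : W = We + E)
    (η : ℝ)
    (hη_def : η = specNorm ((Matrix.PosSemidef.sqrt hWe.posSemidef)⁻¹ * E * (Matrix.PosSemidef.sqrt hWe.posSemidef)⁻¹))
    (hη : η < 1) :
    specNorm (C * W⁻¹ * Cᵀ - C * We⁻¹ * Cᵀ) ≤ (η / (1 - η)) * specNorm K := by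
  set S := hWe.posSemidef.sqrt
  have hSu : IsUnit S.det := (isUnit_iff_isUnit_det S).mp hWe.isUnit_sqrt
  have hSt : Sᵀ = S := hWe.posSemidef.transpose_sqrt
  have hSS : S * S = We := hWe.posSemidef.sqrt_mul_self
  set F := S⁻¹ * E * S⁻¹
  have hηF : η = ‖F‖ := hη_def
  have hF : ‖F‖ < 1 := hηF ▸ hη
  have hW_conj : W = S * (1 + F) * S := by
    rw [hW_def, ← hSS, Matrix.mul_add, Matrix.add_mul, Matrix.mul_one, Matrix.mul_assoc S F S,
      nonsing_inv_mul_cancel_right _ _ hSu, mul_nonsing_inv_cancel_left _ _ hSu]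
  have hC : C = K * P := by
    rw [hP, mul_nonsing_inv_cancel_left _ _ ((isUnit_iff_isUnit_det K).mp hK.isUnit)]
  set B := C * S⁻¹
  calc specNorm (C * W⁻¹ * Cᵀ - C * We⁻¹ * Cᵀ) = ‖B * ((1 + F)⁻¹ * F) * Bᵀ‖ := by
        rw [← norm_neg, hW_conj, ← hSS,
          mul_inv_conj_mul_transpose_sub _ hSt (isUnit_one_add_of_l2_opNorm_lt_one hF)]; rfl
    _ ≤ ‖(1 + F)⁻¹ * F‖ * (‖B‖ * ‖B‖) := l2_opNorm_mul_mul_transpose_le _ _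
    _ ≤ (η / (1 - η)) * ‖K‖ := by
      have hη0 : 0 ≤ η := hηF ▸ norm_nonneg F
      refine mul_le_mul ?_ ?_ (by positivity) (div_nonneg hη0 (by linarith))
      · calc ‖(1 + F)⁻¹ * F‖ ≤ ‖(1 + F)⁻¹‖ * ‖F‖ := l2_opNorm_mul _ _
          _ ≤ (1 - η)⁻¹ * η := by rw [hηF]; gcongr; exact l2_opNorm_inv_one_add_le hF
          _ = η / (1 - η) := inv_mul_eq_div _ _
      · simp only [B, hC]
        exact l2_opNorm_mul_self_mul_inv_le hK.posSemidef P hWe.isUnit_sqrt hSt (hSS.trans hWe_def)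

/-- Theorem 3: out-of-sample perturbation bound for the Nyström approximation. -/
theorem stmt_13 {n m : ℕ} (K : Matrix (Fin n) (Fin n) ℝ) (hK : K.PosDef)
    (C : Matrix (Fin n) (Fin m) ℝ)
    (P : Matrix (Fin n) (Fin m) ℝ) (hP : P = K⁻¹ * C)
    (We : Matrix (Fin m) (Fin m) ℝ) (hWe_def : We = Pᵀ * K * P) (hWe : We.PosDef)
    (E : Matrix (Fin m) (Fin m) ℝ) (hE : Eᵀ = E)
    (W : Matrix (Fin m) (Fin m) ℝ) (hW_def : W = We + E) (hW : W.PosDef)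
    (η : ℝ)
    (hη_def : η = specNorm ((Matrix.PosSemidef.sqrt hWe.posSemidef)⁻¹ * E * (Matrix.PosSemidef.sqrt hWe.posSemidef)⁻¹))
    (hη : η < 1) :
    specNorm (C * W⁻¹ * Cᵀ - C * We⁻¹ * Cᵀ) ≤ (η / (1 - η)) * specNorm K :=
  stmt_13_general K hK C P hP We hWe_def hWe E W hW_def η hη_def hη
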